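/- arXiv:cs/0602041 — 2 statements merged into one kernel-verified Lean document; each statement's English description precedes it below -/
import Mathlib

section
/- Let X = A ∪ B (disjoint), with a ∈ A and x, y ∈ X. Define S₁(δ) = ∑_{{a₁,a₂} ⊆ A} Z_δ(a₁,a₂) (scaled Z). Then the coefficient of δ(x,y) in S₁(δ) is: -C(|B|,2) if both x,y ∈ A; (1/2)(|A|-1)(|B|-1) if exactly one of x,y is in A; and -C(|A|,2) if neither is in A. (Here n = |A| + |B| and |A| ≥ 2.) -/
open Finset
open scoped Classical

/-- `w_δ(ij:kl) = (1/2)(δ(i,k)+δ(i,l)+δ(j,k)+δ(j,l)) - δ(i,j) - δ(k,l)`. -/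
noncomputable def njw {X : Type*} (δ : X → X → ℝ) (i j k l : X) : ℝ :=
  (δ i k + δ i l + δ j k + δ j l) / 2 - δ i j - δ k l

/-- The scaled Z-criterion `Z_δ(i,j) = ∑_{{k,l} ⊆ X\{i,j}} w_δ(ij:kl)`. -/
noncomputable def njZ {X : Type*} [Fintype X] [DecidableEq X]
    (δ : X → X → ℝ) (i j : X) : ℝ :=
  (1 / 2) * ∑ k ∈ (Finset.univ.erase i).erase j,
    ∑ l ∈ ((Finset.univ.erase i).erase j).erase k, njw δ i j k l

/-- `S₁(δ) = ∑_{{a₁,a₂} ⊆ A} Z_δ(a₁,a₂)` (sum over unordered pairs of `A`). -/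
noncomputable def njS1 {X : Type*} [Fintype X] [DecidableEq X]
    (A : Finset X) (δ : X → X → ℝ) : ℝ :=
  (1 / 2) * ∑ a₁ ∈ A, ∑ a₂ ∈ A.erase a₁, njZ δ a₁ a₂

/-!
Expanding the double sum over `k ≠ l` avoiding `i, j` gives the closed form
`2 Z_δ(i,j) = (n-1)(R_i + R_j) - (n-1)(n-2) δ(i,j) - T` with row sums `R` and total `T`. Summing
over pairs of `A`, both sides of the theorem become linear combinations of the block sums
`δ(A,A)`, `δ(A,B)`, `δ(B,B)` (`δ(B,A) = δ(A,B)` by symmetry), and their coefficients agree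
once `n = |A| + |B|` is substituted.
-/

theorem Finset.sum_erase_erase_eq_sub {ι M : Type*} [DecidableEq ι] [AddCommGroup M]
    {s : Finset ι} {i j : ι} (hi : i ∈ s) (hj : j ∈ s) (hij : i ≠ j) (f : ι → M) :
    ∑ k ∈ (s.erase i).erase j, f k = ∑ k ∈ s, f k - f i - f j := by
  rw [sum_erase_eq_sub (mem_erase.2 ⟨hij.symm, hj⟩), sum_erase_eq_sub hi]

section

variable {X : Type*} [DecidableEq X] {δ : X → X → ℝ}

theorem sum_sum_erase_njw (hdiag : ∀ x, δ x x = 0) (U : Finset X) (i j : X) :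
    ∑ k ∈ U, ∑ l ∈ U.erase k, njw δ i j k l =
      ((#U : ℝ) - 1) * (∑ k ∈ U, δ i k + ∑ k ∈ U, δ j k) - #U * ((#U : ℝ) - 1) * δ i j
        - ∑ k ∈ U, ∑ l ∈ U, δ k l := by
  have hdiag_njw : ∀ k, njw δ i j k k = δ i k + δ j k - δ i j := fun k => by
    simp only [njw, hdiag]; ring
  rw [sum_congr rfl fun k hk => sum_erase_eq_sub hk]
  simp only [hdiag_njw, sum_sub_distrib]
  simp only [njw, sum_sub_distrib, ← sum_div, sum_add_distrib, sum_const, nsmul_eq_mul, ← mul_sum]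
  ring

variable [Fintype X]

theorem njZ_eq_of_ne (hsym : ∀ x y, δ x y = δ y x) (hdiag : ∀ x, δ x x = 0) {i j : X} (hij : i ≠ j) :
    njZ δ i j = (((Fintype.card X : ℝ) - 1) * (∑ k, δ i k + ∑ k, δ j k)
      - ((Fintype.card X : ℝ) - 2) * ((Fintype.card X : ℝ) - 1) * δ i j
      - ∑ k, ∑ l, δ k l) / 2 := by
  have hi : i ∈ univ := mem_univ i
  have hj : j ∈ univ := mem_univ j
  set U := (univ.erase i).erase j
  have hU : ∀ f : X → ℝ, ∑ k ∈ U, f k = ∑ k, f k - f i - f j :=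
    sum_erase_erase_eq_sub hi hj hij
  have hcard : (#U : ℝ) = Fintype.card X - 2 := by
    rw [eq_sub_iff_add_eq, ← card_univ, ← card_erase_add_one hi,
      ← card_erase_add_one (mem_erase.2 ⟨hij.symm, hj⟩)]
    push_cast; ring
  have hcol : ∀ l, ∑ k, δ k l = ∑ k, δ l k := fun l => sum_congr rfl fun k _ => hsym k l
  have hblock : ∑ k ∈ U, ∑ l ∈ U, δ k l
      = ∑ k, ∑ l, δ k l - 2 * ∑ k, δ i k - 2 * ∑ k, δ j k + 2 * δ i j := by
    simp only [hU, sum_sub_distrib, hcol, hdiag, hsym j i]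
    ring
  rw [njZ, sum_sum_erase_njw hdiag, hblock, hU, hU, hcard, hdiag, hdiag, hsym j i]
  ring

theorem njS1_eq (hsym : ∀ x y, δ x y = δ y x) (hdiag : ∀ x, δ x x = 0) (A : Finset X) :
    njS1 A δ = (2 * ((#A : ℝ) - 1) * ((Fintype.card X : ℝ) - 1) * ∑ a ∈ A, ∑ y, δ a y
      - ((Fintype.card X : ℝ) - 2) * ((Fintype.card X : ℝ) - 1) * ∑ a ∈ A, ∑ b ∈ A, δ a b
      - #A * ((#A : ℝ) - 1) * ∑ x, ∑ y, δ x y) / 4 := by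
  rw [njS1, sum_congr rfl fun _ _ => sum_congr rfl fun b hb =>
    njZ_eq_of_ne hsym hdiag (ne_of_mem_erase hb).symm]
  rw [sum_congr rfl fun a ha => sum_erase_eq_sub ha]
  simp only [hdiag, sum_sub_distrib, ← sum_div, sum_add_distrib, ← mul_sum, sum_const,
    nsmul_eq_mul]
  ring

end

theorem sum_sum_ite_mem_mul {X : Type*} [Fintype X] [DecidableEq X] (A : Finset X)
    (p q r : ℝ) (f : X → X → ℝ) :
    ∑ x, ∑ y, (if x ∈ A ∧ y ∈ A then p else if x ∈ A ∨ y ∈ A then q else r) * f x y =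
      p * ∑ x ∈ A, ∑ y ∈ A, f x y + q * (∑ x ∈ A, ∑ y ∈ Aᶜ, f x y + ∑ x ∈ Aᶜ, ∑ y ∈ A, f x y)
        + r * ∑ x ∈ Aᶜ, ∑ y ∈ Aᶜ, f x y := by
  set c : X → X → ℝ := fun x y => if x ∈ A ∧ y ∈ A then p else if x ∈ A ∨ y ∈ A then q else r
  have block : ∀ (s t : Finset X) (a : ℝ), (∀ x ∈ s, ∀ y ∈ t, c x y = a) →
      ∑ x ∈ s, ∑ y ∈ t, c x y * f x y = a * ∑ x ∈ s, ∑ y ∈ t, f x y := fun s t a h => by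
    simp only [mul_sum]
    exact sum_congr rfl fun x hx => sum_congr rfl fun y hy => by rw [h x hx y hy]
  simp only [← sum_add_sum_compl A, sum_add_distrib]
  rw [block A A p (by simp +contextual [c]), block A Aᶜ q (by simp +contextual [c]),
    block Aᶜ A q (by simp +contextual [c]), block Aᶜ Aᶜ r (by simp +contextual [c])]
  ring

theorem statement_14_general {X : Type*} [Fintype X] [DecidableEq X]
    (A : Finset X)
    (δ : X → X → ℝ)
    (hsym : ∀ x y, δ x y = δ y x) (hdiag : ∀ x, δ x x = 0) :
    njS1 A δ =
      (1 / 2) * ∑ x : X, ∑ y ∈ Finset.univ.erase x,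
        (if x ∈ A ∧ y ∈ A then -((Aᶜ.card.choose 2 : ℝ))
         else if x ∈ A ∨ y ∈ A
           then (1 / 2) * ((A.card : ℝ) - 1) * ((Aᶜ.card : ℝ) - 1)
           else -((A.card.choose 2 : ℝ))) * δ x y := by
  have hrow : ∀ x, ∑ y, δ x y = ∑ y ∈ A, δ x y + ∑ y ∈ Aᶜ, δ x y :=
    fun x => (sum_add_sum_compl A (δ x)).symm
  have htotal : ∑ x, ∑ y, δ x y = ∑ x ∈ A, ∑ y, δ x y + ∑ x ∈ Aᶜ, ∑ y, δ x y :=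
    (sum_add_sum_compl A _).symm
  have hcross : ∑ x ∈ Aᶜ, ∑ y ∈ A, δ x y = ∑ x ∈ A, ∑ y ∈ Aᶜ, δ x y := by
    rw [sum_comm]; simp only [hsym]
  have hcard : (Fintype.card X : ℝ) = #A + #Aᶜ := by exact_mod_cast (card_add_card_compl A).symm
  simp only [sum_erase_eq_sub (mem_univ _), hdiag, mul_zero, sub_zero]
  rw [sum_sum_ite_mem_mul, njS1_eq hsym hdiag, htotal]
  simp only [hrow, sum_add_distrib]
  rw [hcross, hcard, Nat.cast_choose_two, Nat.cast_choose_two]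
  ring

/-- for the partition `X = A ∪ B` (`B = Aᶜ`), the coefficient of `δ(x,y)`
in `S₁(δ) = ∑_{{a₁,a₂} ⊆ A} Z_δ(a₁,a₂)` is `-C(|B|,2)` if `x,y ∈ A`,
`(1/2)(|A|-1)(|B|-1)` if exactly one of `x,y` lies in `A`, and `-C(|A|,2)` otherwise. -/
theorem statement_14 {X : Type*} [Fintype X] [DecidableEq X]
    (A : Finset X) (hA : 2 ≤ A.card)
    (δ : X → X → ℝ)
    (hsym : ∀ x y, δ x y = δ y x) (hdiag : ∀ x, δ x x = 0) :
    njS1 A δ =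
      (1 / 2) * ∑ x : X, ∑ y ∈ Finset.univ.erase x,
        (if x ∈ A ∧ y ∈ A then -((Aᶜ.card.choose 2 : ℝ))
         else if x ∈ A ∨ y ∈ A
           then (1 / 2) * ((A.card : ℝ) - 1) * ((Aᶜ.card : ℝ) - 1)
           else -((A.card.choose 2 : ℝ))) * δ x y :=
  statement_14_general A δ hsym hdiag
end

section
/- Let T be a phylogenetic X-tree, e an edge of T of length l(e) inducing the split A|B with |A| ≤ |B|, |A| ≥ 2, and let i ∈ A, j ∈ B. Define S(δ_T) = ∑_{{a₁,a₂} ⊆ A} (Z_{δ_T}(a₁,a₂) - Z_{δ_T}(i,j)) with the scaled Z-criterion. Then the coefficient of l(e) in S(δ_T) is C(|A|,2)(|B|-1)(n-1), and the coefficient of l(e') is nonnegative for every other edge e' of T; consequently S(δ_T) ≥ C(|A|,2)(|B|-1)(n-1)·l(e). -/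
open Finset
open scoped Classical

/-- Edge `e` (with split side `σ e`) separates the pair `p,q` from the pair `r,s`. -/
def sepE {X E : Type*} (σ : E → Finset X) (e : E) (p q r s : X) : Prop :=
  (p ∈ σ e ∧ q ∈ σ e ∧ r ∉ σ e ∧ s ∉ σ e) ∨
  (p ∉ σ e ∧ q ∉ σ e ∧ r ∈ σ e ∧ s ∈ σ e)

/-- `(ij:kl)` is a quartet of the tree encoded by the split system `σ`:
some internal edge separates `{i,j}` from `{k,l}`. -/
def isQuartet {X E : Type*} (σ : E → Finset X) (i j k l : X) : Prop :=
  ∃ e, sepE σ e i j k l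

/-- Pairwise compatibility of the splits: the condition under which a split system
is exactly the split system of a (phylogenetic) tree. -/
def splitsCompatible {X E : Type*} [Fintype X] (σ : E → Finset X) : Prop :=
  ∀ e f, σ e ⊆ σ f ∨ σ f ⊆ σ e ∨ (∀ a, a ∈ σ e → a ∉ σ f) ∨ (∀ a, a ∈ σ e ∨ a ∈ σ f)

/-- A dissimilarity map `δ` is quartet consistent with the tree encoded by `σ`. -/
def quartetConsistent {X E : Type*} (σ : E → Finset X) (δ : X → X → ℝ) : Prop :=
  ∀ i j k l : X, i ≠ j → i ≠ k → i ≠ l → j ≠ k → j ≠ l → k ≠ l →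
    isQuartet σ i j k l →
      njw δ i j k l > max (njw δ i k j l) (njw δ i l j k)

/-- `(x,y)` is a cherry of the tree encoded by `σ`: some edge induces the split
`{x,y} | X \ {x,y}`. -/
def isCherry {X E : Type*} [Fintype X] [DecidableEq X]
    (σ : E → Finset X) (x y : X) : Prop :=
  x ≠ y ∧ ∃ e, σ e = {x, y} ∨ σ e = ({x, y} : Finset X)ᶜ

/-- `S(δ) = ∑_{{a₁,a₂} ⊆ A} (Z_δ(a₁,a₂) - Z_δ(i,j))` with the scaled Z-criterion. -/
noncomputable def njS {X : Type*} [Fintype X] [DecidableEq X]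
    (A : Finset X) (i j : X) (δ : X → X → ℝ) : ℝ :=
  (1 / 2) * ∑ a₁ ∈ A, ∑ a₂ ∈ A.erase a₁, (njZ δ a₁ a₂ - njZ δ i j)

/-- The indicator dissimilarity map of the split of edge `e`. -/
noncomputable def splitInd {X E : Type*} [DecidableEq X]
    (σ : E → Finset X) (e : E) : X → X → ℝ :=
  fun x y => if (x ∈ σ e) ≠ (y ∈ σ e) then 1 else 0

/-!
`S` is linear in the dissimilarity and `δ_T = ∑ₑ l(e) δₑ`, where `δₑ` is the split metric of `e`,
so the coefficient of `l(e)` is `S(δₑ)`. For the split metric of `C | Cᶜ` (`c = |C|`, `m = |Cᶜ|`)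
the value `Z(a,b)` only depends on the sides of `a` and `b`: it is `m(m-1)` on pairs inside `C`,
`c(c-1)` on pairs inside `Cᶜ` and `-(c-1)(m-1)` on separated pairs. Hence `S(δₑ)` is a polynomial
in `c`, `m`, `|A ∩ C|` and `|A \ C|`. As `C` and `Cᶜ` have the same split metric, compatibility with
`A | B` leaves the cases `C ⊆ A` and `A ⊆ C`, in which this polynomial factors into visibly
nonnegative terms; for `C ⊆ A`, `i ∉ C` it is `c(c-1)(n-1)(|B|-|A|)/2`, which is where `|A| ≤ |B|`
enters, and for `C = A` it is the stated coefficient of `l(e)`.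
-/

section SplitMetric

variable {X : Type*} [DecidableEq X]

noncomputable def splitMetric (C : Finset X) : X → X → ℝ :=
  fun x y => if (x ∈ C) ≠ (y ∈ C) then 1 else 0

noncomputable def boolDist (x y : Bool) : ℝ := if x = y then 0 else 1

lemma splitMetric_apply (C : Finset X) (x y : X) :
    splitMetric C x y = boolDist (x ∈ C) (y ∈ C) := by
  by_cases hx : x ∈ C <;> by_cases hy : y ∈ C <;> simp [splitMetric, boolDist, hx, hy]

lemma splitMetric_compl [Fintype X] (C : Finset X) : splitMetric Cᶜ = splitMetric C := by
  ext x y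
  by_cases hx : x ∈ C <;> by_cases hy : y ∈ C <;> simp [splitMetric, hx, hy]

lemma sum_comp_decide_mem (T C : Finset X) (g : Bool → ℝ) :
    ∑ l ∈ T, g (l ∈ C) = #(T ∩ C) * g true + #(T \ C) * g false := by
  have hg : ∀ l, g (l ∈ C) = if l ∈ C then g true else g false := fun l => by
    by_cases hl : l ∈ C <;> simp [hl]
  simp [hg, sum_ite, filter_mem_eq_inter, filter_notMem_eq_sdiff]

lemma sum_sum_erase_comp_decide_mem (T C : Finset X) (f : Bool → Bool → ℝ) :
    ∑ k ∈ T, ∑ l ∈ T.erase k, f (k ∈ C) (l ∈ C) =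
      #(T ∩ C) * (#(T ∩ C) - 1) * f true true
      + #(T ∩ C) * #(T \ C) * (f true false + f false true)
      + #(T \ C) * (#(T \ C) - 1) * f false false := by
  rw [sum_congr rfl fun k hk => sum_erase_eq_sub (f := fun l => f (k ∈ C) (l ∈ C)) hk]
  simp only [sum_comp_decide_mem T C (f _)]
  rw [sum_comp_decide_mem T C (fun x => #(T ∩ C) * f x true + #(T \ C) * f x false - f x x)]
  ring

lemma cast_card_erase (s : Finset X) (a : X) :
    (#(s.erase a) : ℝ) = #s - if a ∈ s then 1 else 0 := by
  split_ifs with h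
  · rw [← card_erase_add_one h]; push_cast; ring
  · rw [erase_eq_of_notMem h, sub_zero]

lemma cast_card_erase_erase_inter [Fintype X] (C : Finset X) {a b : X} (hab : a ≠ b) :
    (#((univ.erase a).erase b ∩ C) : ℝ) =
      #C - (if a ∈ C then 1 else 0) - (if b ∈ C then 1 else 0) := by
  have hT : (univ.erase a).erase b ∩ C = (C.erase a).erase b := by
    ext x; simp only [mem_inter, mem_erase, mem_univ, and_true]; tauto
  rw [hT, cast_card_erase, cast_card_erase]
  simp [hab.symm]

noncomputable def splitZ (c m : ℝ) : Bool → Bool → ℝ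
  | true, true => m * (m - 1)
  | false, false => c * (c - 1)
  | _, _ => -((c - 1) * (m - 1))

lemma njZ_splitMetric [Fintype X] (C : Finset X) {a b : X} (hab : a ≠ b) :
    njZ (splitMetric C) a b = splitZ #C #Cᶜ (a ∈ C) (b ∈ C) := by
  have hw : ∀ k l, njw (splitMetric C) a b k l =
      njw boolDist (a ∈ C) (b ∈ C) (k ∈ C) (l ∈ C) := fun k l => by
    simp only [njw, splitMetric_apply]
  simp only [njZ, hw]
  rw [sum_sum_erase_comp_decide_mem, sdiff_eq_inter_compl, cast_card_erase_erase_inter _ hab,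
    cast_card_erase_erase_inter _ hab]
  by_cases ha : a ∈ C <;> by_cases hb : b ∈ C <;> simp [ha, hb, splitZ, njw, boolDist] <;> ring

lemma two_mul_njS_splitMetric [Fintype X] (A C : Finset X) {i j : X} (hij : i ≠ j) :
    2 * njS A i j (splitMetric C) =
      #(A ∩ C) * (#(A ∩ C) - 1) * splitZ #C #Cᶜ true true
      + 2 * #(A ∩ C) * #(A \ C) * splitZ #C #Cᶜ true false
      + #(A \ C) * (#(A \ C) - 1) * splitZ #C #Cᶜ false false
      - #A * (#A - 1) * splitZ #C #Cᶜ (i ∈ C) (j ∈ C) := by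
  have hZ : ∀ a₁ ∈ A,
      ∑ a₂ ∈ A.erase a₁, (njZ (splitMetric C) a₁ a₂ - njZ (splitMetric C) i j) =
        ∑ a₂ ∈ A.erase a₁, (splitZ #C #Cᶜ (a₁ ∈ C) (a₂ ∈ C) - splitZ #C #Cᶜ (i ∈ C) (j ∈ C)) :=
    fun a₁ _ => sum_congr rfl fun a₂ ha₂ => by
      rw [njZ_splitMetric C (ne_of_mem_erase ha₂).symm, njZ_splitMetric C hij]
  have hA : (#A : ℝ) = #(A ∩ C) + #(A \ C) := by
    exact_mod_cast (card_inter_add_card_sdiff A C).symm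
  have hsymm : splitZ #C #Cᶜ false true = splitZ #C #Cᶜ true false := rfl
  rw [njS, sum_congr rfl hZ, sum_sum_erase_comp_decide_mem A C
    (fun x y => splitZ #C #Cᶜ x y - splitZ #C #Cᶜ (i ∈ C) (j ∈ C)), hA, hsymm]
  ring

lemma natCast_mul_sub_one_nonneg (k : ℕ) : 0 ≤ (k : ℝ) * (k - 1) := by
  rcases k with _ | k
  · simp
  · push_cast
    rw [add_sub_cancel_right]
    positivity

variable {A C : Finset X} {i j : X}

lemma cast_card_eq_add_card_sdiff (hCA : C ⊆ A) : (#A : ℝ) = #C + #(A \ C) := by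
  rw [← card_sdiff_add_card_eq_card hCA]; push_cast; ring

variable [Fintype X]

lemma two_mul_njS_splitMetric_of_subset_of_mem (hCA : C ⊆ A) (hi : i ∈ C) (hj : j ∉ A) :
    2 * njS A i j (splitMetric C) =
      (#C - 1) * ((#Cᶜ - 1) * (#C * (#C + #Cᶜ - 1) + #(A \ C) * (#(A \ C) - 1))
        + #C * (#(A \ C) * (#(A \ C) - 1))) := by
  have hjC : j ∉ C := fun h => hj (hCA h)
  rw [two_mul_njS_splitMetric A C (ne_of_mem_of_not_mem (hCA hi) hj), inter_eq_right.2 hCA,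
    cast_card_eq_add_card_sdiff hCA]
  simp [splitZ, hi, hjC]
  ring

lemma two_mul_njS_splitMetric_of_subset_of_notMem (hCA : C ⊆ A) (hi : i ∈ A) (hiC : i ∉ C)
    (hj : j ∉ A) :
    2 * njS A i j (splitMetric C) =
      #C * (#C - 1) * (#C + #Cᶜ - 1) * (#Cᶜ - #C - 2 * #(A \ C)) := by
  have hjC : j ∉ C := fun h => hj (hCA h)
  rw [two_mul_njS_splitMetric A C (ne_of_mem_of_not_mem hi hj), inter_eq_right.2 hCA,
    cast_card_eq_add_card_sdiff hCA]
  simp [splitZ, hiC, hjC]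
  ring

lemma njS_splitMetric_nonneg_of_subset (hCA : C ⊆ A) (hi : i ∈ A) (hj : j ∉ A)
    (hAB : #A ≤ #Aᶜ) : 0 ≤ njS A i j (splitMetric C) := by
  have hjC : j ∉ C := fun h => hj (hCA h)
  have hm : (1 : ℝ) ≤ #Cᶜ := by exact_mod_cast card_pos.2 ⟨j, mem_compl.2 hjC⟩
  suffices 0 ≤ 2 * njS A i j (splitMetric C) by linarith
  by_cases hiC : i ∈ C
  · have hc : (1 : ℝ) ≤ #C := by exact_mod_cast card_pos.2 ⟨i, hiC⟩
    have hD := natCast_mul_sub_one_nonneg #(A \ C)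
    rw [two_mul_njS_splitMetric_of_subset_of_mem hCA hiC hj]
    refine mul_nonneg (by linarith) (add_nonneg (mul_nonneg (by linarith) (add_nonneg ?_ hD))
      (mul_nonneg (by linarith) hD))
    exact mul_nonneg (by linarith) (by linarith)
  · have hc := natCast_mul_sub_one_nonneg #C
    have hsize : (#C : ℝ) + 2 * #(A \ C) ≤ #Cᶜ := by
      have hA := cast_card_eq_add_card_sdiff hCA
      have hAc : (#A + #Aᶜ : ℝ) = #C + #Cᶜ := by
        exact_mod_cast (card_add_card_compl A).trans (card_add_card_compl C).symm
      have : (#A : ℝ) ≤ #Aᶜ := by exact_mod_cast hAB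
      linarith
    rw [two_mul_njS_splitMetric_of_subset_of_notMem hCA hi hiC hj]
    exact mul_nonneg (mul_nonneg hc (by linarith)) (by linarith)

lemma njS_splitMetric_nonneg_of_superset (hAC : A ⊆ C) (hi : i ∈ A) (hj : j ∉ A) :
    0 ≤ njS A i j (splitMetric C) := by
  have h2 : 2 * njS A i j (splitMetric C) =
      #A * (#A - 1) * (splitZ #C #Cᶜ true true - splitZ #C #Cᶜ true (j ∈ C)) := by
    rw [two_mul_njS_splitMetric A C (ne_of_mem_of_not_mem hi hj), inter_eq_left.2 hAC,
      sdiff_eq_empty_iff_subset.2 hAC]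
    simp [hAC hi]
    ring
  suffices 0 ≤ 2 * njS A i j (splitMetric C) by linarith
  rw [h2]
  refine mul_nonneg (natCast_mul_sub_one_nonneg _) ?_
  by_cases hjC : j ∈ C
  · simp [hjC]
  · have hc : (1 : ℝ) ≤ #C := by exact_mod_cast card_pos.2 ⟨i, hAC hi⟩
    have hm : (1 : ℝ) ≤ #Cᶜ := by exact_mod_cast card_pos.2 ⟨j, mem_compl.2 hjC⟩
    simp only [splitZ, hjC, decide_false, sub_neg_eq_add]
    exact add_nonneg (mul_nonneg (by linarith) (by linarith))
      (mul_nonneg (by linarith) (by linarith))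

lemma njS_splitMetric_nonneg
    (hcomp : C ⊆ A ∨ A ⊆ C ∨ (∀ a, a ∈ C → a ∉ A) ∨ (∀ a, a ∈ C ∨ a ∈ A))
    (hi : i ∈ A) (hj : j ∉ A) (hAB : #A ≤ #Aᶜ) : 0 ≤ njS A i j (splitMetric C) := by
  rcases hcomp with hCA | hAC | hdisj | hcover
  · exact njS_splitMetric_nonneg_of_subset hCA hi hj hAB
  · exact njS_splitMetric_nonneg_of_superset hAC hi hj
  · rw [← splitMetric_compl]
    exact njS_splitMetric_nonneg_of_superset (fun a ha => mem_compl.2 fun h => hdisj a h ha) hi hj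
  · rw [← splitMetric_compl]
    exact njS_splitMetric_nonneg_of_subset
      (fun a ha => (hcover a).resolve_left (mem_compl.1 ha)) hi hj hAB

lemma njS_splitMetric_self (hi : i ∈ A) (hj : j ∉ A) :
    njS A i j (splitMetric A) = ((#A).choose 2 : ℝ) * (#Aᶜ - 1) * (Fintype.card X - 1) := by
  have h := two_mul_njS_splitMetric_of_subset_of_mem subset_rfl hi hj
  simp only [sdiff_self, bot_eq_empty, card_empty, Nat.cast_zero] at h
  rw [Nat.cast_choose_two, ← card_add_card_compl A]
  push_cast
  linear_combination h / 2

end SplitMetric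

section Linearity

variable {X E : Type*} (s : Finset E) (w : E → ℝ) (g : E → X → X → ℝ)

lemma njw_sum (p q k l : X) :
    njw (fun x y => ∑ e ∈ s, w e * g e x y) p q k l = ∑ e ∈ s, w e * njw (g e) p q k l := by
  simp only [njw, sum_div, ← sum_add_distrib, ← sum_sub_distrib]
  exact sum_congr rfl fun e _ => by ring

lemma njZ_sum [Fintype X] [DecidableEq X] (p q : X) :
    njZ (fun x y => ∑ e ∈ s, w e * g e x y) p q = ∑ e ∈ s, w e * njZ (g e) p q := by
  simp only [njZ, njw_sum, mul_sum]
  conv_rhs => rw [sum_comm]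
  refine sum_congr rfl fun k _ => ?_
  rw [sum_comm]
  exact sum_congr rfl fun e _ => sum_congr rfl fun l _ => by ring

lemma njS_sum [Fintype X] [DecidableEq X] (A : Finset X) (i j : X) :
    njS A i j (fun x y => ∑ e ∈ s, w e * g e x y) = ∑ e ∈ s, w e * njS A i j (g e) := by
  simp only [njS, njZ_sum, ← sum_sub_distrib, ← mul_sub, mul_sum]
  conv_rhs => rw [sum_comm]
  refine sum_congr rfl fun a₁ _ => ?_
  rw [sum_comm]
  exact sum_congr rfl fun e _ => sum_congr rfl fun a₂ _ => by ring

end Linearity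

theorem statement_15_general {X E : Type*} [Fintype X] [DecidableEq X] [Fintype E]
    (σ : E → Finset X) (le : E → ℝ) (hle : ∀ e, 0 < le e)
    (hcompat : splitsCompatible σ)
    (δT : X → X → ℝ)
    (hδT : ∀ x y, δT x y = ∑ e, if (x ∈ σ e) ≠ (y ∈ σ e) then le e else 0)
    (A : Finset X) (e₀ : E) (he₀ : σ e₀ = A)
    (hAB : A.card ≤ Aᶜ.card)
    (i j : X) (hi : i ∈ A) (hj : j ∉ A) :
    njS A i j (splitInd σ e₀) =
        (A.card.choose 2 : ℝ) * ((Aᶜ.card : ℝ) - 1) * ((Fintype.card X : ℝ) - 1) ∧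
    (∀ e, e ≠ e₀ → 0 ≤ njS A i j (splitInd σ e)) ∧
    njS A i j δT ≥
        (A.card.choose 2 : ℝ) * ((Aᶜ.card : ℝ) - 1) * ((Fintype.card X : ℝ) - 1)
          * le e₀ := by
  have hsplit : ∀ e, splitInd σ e = splitMetric (σ e) := fun _ => rfl
  have hself : njS A i j (splitInd σ e₀) =
      (A.card.choose 2 : ℝ) * ((Aᶜ.card : ℝ) - 1) * ((Fintype.card X : ℝ) - 1) := by
    rw [hsplit, he₀]
    exact njS_splitMetric_self hi hj
  have hother : ∀ e, 0 ≤ njS A i j (splitInd σ e) := fun e => by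
    have hcomp := hcompat e e₀
    rw [he₀] at hcomp
    exact njS_splitMetric_nonneg hcomp hi hj hAB
  refine ⟨hself, fun e _ => hother e, ?_⟩
  have hδ : δT = fun x y => ∑ e, le e * splitInd σ e x y := by
    funext x y
    rw [hδT]
    simp only [splitInd, mul_ite, mul_one, mul_zero]
  have hrest : 0 ≤ ∑ e ∈ univ.erase e₀, le e * njS A i j (splitInd σ e) :=
    sum_nonneg fun e _ => mul_nonneg (hle e).le (hother e)
  rw [hδ, njS_sum, ← add_sum_erase _ _ (mem_univ e₀), hself]
  linarith

/-- for a tree with an edge `e₀` inducing the split `A|B`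
(`B = Aᶜ`, `2 ≤ |A| ≤ |B|`), `i ∈ A`, `j ∈ B`: writing `S(δ_T)` as a linear function of
the edge lengths, the coefficient of `l(e₀)` is `C(|A|,2)(|B|-1)(n-1)`, the coefficient
of `l(e')` is nonnegative for every other edge `e'`, and consequently
`S(δ_T) ≥ C(|A|,2)(|B|-1)(n-1)·l(e₀)`. -/
theorem statement_15 {X E : Type*} [Fintype X] [DecidableEq X] [Fintype E]
    (σ : E → Finset X) (le : E → ℝ) (hle : ∀ e, 0 < le e)
    (hcompat : splitsCompatible σ)
    (hnontriv : ∀ e, (σ e).Nonempty ∧ σ e ≠ Finset.univ)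
    (δT : X → X → ℝ)
    (hδT : ∀ x y, δT x y = ∑ e, if (x ∈ σ e) ≠ (y ∈ σ e) then le e else 0)
    (A : Finset X) (e₀ : E) (he₀ : σ e₀ = A)
    (hA2 : 2 ≤ A.card) (hAB : A.card ≤ Aᶜ.card)
    (i j : X) (hi : i ∈ A) (hj : j ∉ A) :
    njS A i j (splitInd σ e₀) =
        (A.card.choose 2 : ℝ) * ((Aᶜ.card : ℝ) - 1) * ((Fintype.card X : ℝ) - 1) ∧
    (∀ e, e ≠ e₀ → 0 ≤ njS A i j (splitInd σ e)) ∧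
    njS A i j δT ≥
        (A.card.choose 2 : ℝ) * ((Aᶜ.card : ℝ) - 1) * ((Fintype.card X : ℝ) - 1)
          * le e₀ :=
  statement_15_general σ le hle hcompat δT hδT A e₀ he₀ hAB i j hi hj
end
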